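/- arXiv:2603.27159 — 2 statements merged into one kernel-verified Lean document; each statement's English description precedes it below -/
import Mathlib

section
/- Let M ∈ ℝ^{n×n} and Δ_0, Δ_1, … ∈ ℝ^{n×n} be matrices with ‖Δ_k‖ ≤ ε for all k, and suppose there exist κ, γ > 0 such that ‖M^k‖ ≤ κ γ^k for all k ≥ 0. Then for any integers 0 ≤ k₁ < k₂, the product (M+Δ_{k₂−1})(M+Δ_{k₂−2})⋯(M+Δ_{k₁}) satisfies ‖(M+Δ_{k₂−1})⋯(M+Δ_{k₁}) − M^{k₂−k₁}‖ ≤ (k₂−k₁) κ² (κε + γ)^{k₂−k₁−1} ε. -/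
open Matrix

/-- Spectral norm of a real matrix: the operator norm of the induced linear map
between Euclidean spaces. -/
noncomputable def specNorm {m n : Type*} [Fintype m] [Fintype n] [DecidableEq n]
    (M : Matrix m n ℝ) : ℝ :=
  ‖LinearMap.toContinuousLinearMap (Matrix.toEuclideanLin M)‖

/-- The product `(M + Δ_{k₁+j-1}) (M + Δ_{k₁+j-2}) ⋯ (M + Δ_{k₁})` of `j` perturbed
factors, with indices decreasing from left to right. -/
noncomputable def prodDesc {n : ℕ} (M : Matrix (Fin n) (Fin n) ℝ)
    (Δ : ℕ → Matrix (Fin n) (Fin n) ℝ) (k₁ : ℕ) : ℕ → Matrix (Fin n) (Fin n) ℝ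
  | 0 => 1
  | j + 1 => (M + Δ (k₁ + j)) * prodDesc M Δ k₁ j

open scoped Matrix.Norms.L2Operator

lemma specNorm_eq_norm {n : ℕ} (M : Matrix (Fin n) (Fin n) ℝ) : specNorm M = ‖M‖ := rfl

lemma prodDesc_sub_pow_eq {n : ℕ} (M : Matrix (Fin n) (Fin n) ℝ)
    (Δ : ℕ → Matrix (Fin n) (Fin n) ℝ) (k₁ : ℕ) (j : ℕ) :
    prodDesc M Δ k₁ j - M ^ j =
      ∑ i ∈ Finset.range j, M ^ (j - 1 - i) * (Δ (k₁ + i) * prodDesc M Δ k₁ i) := by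
  induction j with
  | zero => simp [prodDesc]
  | succ j ih =>
    rw [Finset.sum_range_succ]
    rw [Finset.sum_congr rfl (fun i hi => ?_), ← Finset.mul_sum, ← ih]
    · show (M + Δ (k₁ + j)) * prodDesc M Δ k₁ j - M ^ (j + 1) = _
      have h0 : j + 1 - 1 - j = 0 := by omega
      rw [h0, pow_zero, pow_succ']
      noncomm_ring
    · rw [Finset.mem_range] at hi
      have h : j + 1 - 1 - i = (j - 1 - i) + 1 := by omega
      rw [h, pow_succ', mul_assoc]

lemma key_term_sum {n : ℕ} (M : Matrix (Fin n) (Fin n) ℝ)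
    (Δ : ℕ → Matrix (Fin n) (Fin n) ℝ) (ε κ γ : ℝ) (hε : 0 < ε) (hκ : 0 < κ) (hγ : 0 < γ)
    (hΔ : ∀ k, ‖Δ k‖ ≤ ε) (hM : ∀ k : ℕ, ‖M ^ k‖ ≤ κ * γ ^ k) (k₁ : ℕ) (j : ℕ)
    (hP : ∀ i < j, ‖prodDesc M Δ k₁ i‖ ≤ κ * (κ * ε + γ) ^ i) :
    ‖prodDesc M Δ k₁ j - M ^ j‖
      ≤ ∑ i ∈ Finset.range j, κ * γ ^ (j - 1 - i) * ε * (κ * (κ * ε + γ) ^ i) := by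
  rw [prodDesc_sub_pow_eq]
  refine (norm_sum_le _ _).trans (Finset.sum_le_sum fun i hi => ?_)
  rw [Finset.mem_range] at hi
  refine (norm_mul_le _ _).trans ?_
  have h1 := (norm_mul_le (Δ (k₁ + i)) (prodDesc M Δ k₁ i)).trans
    (mul_le_mul (hΔ (k₁ + i)) (hP i hi) (norm_nonneg _) hε.le)
  calc ‖M ^ (j - 1 - i)‖ * ‖Δ (k₁ + i) * prodDesc M Δ k₁ i‖
      ≤ (κ * γ ^ (j - 1 - i)) * (ε * (κ * (κ * ε + γ) ^ i)) := by
        apply mul_le_mul (hM _) h1 (norm_nonneg _)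
        positivity
    _ = κ * γ ^ (j - 1 - i) * ε * (κ * (κ * ε + γ) ^ i) := by ring

lemma prodDesc_norm_le {n : ℕ} (M : Matrix (Fin n) (Fin n) ℝ)
    (Δ : ℕ → Matrix (Fin n) (Fin n) ℝ) (ε κ γ : ℝ) (hε : 0 < ε) (hκ : 0 < κ) (hγ : 0 < γ)
    (hΔ : ∀ k, ‖Δ k‖ ≤ ε) (hM : ∀ k : ℕ, ‖M ^ k‖ ≤ κ * γ ^ k) (k₁ : ℕ) (j : ℕ) :
    ‖prodDesc M Δ k₁ j‖ ≤ κ * (κ * ε + γ) ^ j := by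
  induction j using Nat.strong_induction_on with
  | _ j ih =>
  have key := key_term_sum M Δ ε κ γ hε hκ hγ hΔ hM k₁ j ih
  have geo : ∑ i ∈ Finset.range j, κ * γ ^ (j - 1 - i) * ε * (κ * (κ * ε + γ) ^ i)
      = κ * ((κ * ε + γ) ^ j - γ ^ j) := by
    have h := geom_sum₂_mul (κ * ε + γ) γ j
    have h2 : κ * ε + γ - γ = κ * ε := by ring
    rw [h2] at h
    have h3 : ∀ i, κ * γ ^ (j - 1 - i) * ε * (κ * (κ * ε + γ) ^ i)
        = κ * ((κ * ε + γ) ^ i * γ ^ (j - 1 - i) * (κ * ε)) := fun i => by ring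
    simp_rw [h3]
    rw [← Finset.mul_sum, ← Finset.sum_mul, h]
  have htri : ‖prodDesc M Δ k₁ j‖ ≤ ‖M ^ j‖ + ‖prodDesc M Δ k₁ j - M ^ j‖ := by
    have := norm_add_le (M ^ j) (prodDesc M Δ k₁ j - M ^ j)
    simpa using this
  have := hM j
  nlinarith [key, geo, htri]

/-- If `‖Δ_k‖ ≤ ε` for all `k` and `‖M^k‖ ≤ κ γ^k` for all `k ≥ 0`, then for all
`0 ≤ k₁ < k₂`,
`‖(M+Δ_{k₂-1})⋯(M+Δ_{k₁}) − M^(k₂-k₁)‖ ≤ (k₂-k₁) κ² (κε + γ)^(k₂-k₁-1) ε`. -/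
theorem specNorm_prod_perturbed_sub_pow_le {n : ℕ} (M : Matrix (Fin n) (Fin n) ℝ)
    (Δ : ℕ → Matrix (Fin n) (Fin n) ℝ) (ε κ γ : ℝ) (hε : 0 < ε) (hκ : 0 < κ) (hγ : 0 < γ)
    (hΔ : ∀ k, specNorm (Δ k) ≤ ε) (hM : ∀ k : ℕ, specNorm (M ^ k) ≤ κ * γ ^ k)
    (k₁ k₂ : ℕ) (hk : k₁ < k₂) :
    specNorm (prodDesc M Δ k₁ (k₂ - k₁) - M ^ (k₂ - k₁))
      ≤ (k₂ - k₁ : ℝ) * κ ^ 2 * (κ * ε + γ) ^ (k₂ - k₁ - 1) * ε := by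
  simp only [specNorm_eq_norm] at *
  set j := k₂ - k₁ with hj
  have hj1 : 1 ≤ j := by omega
  have key := key_term_sum M Δ ε κ γ hε hκ hγ hΔ hM k₁ j
    (fun i _ => prodDesc_norm_le M Δ ε κ γ hε hκ hγ hΔ hM k₁ i)
  have hbd : ∑ i ∈ Finset.range j, κ * γ ^ (j - 1 - i) * ε * (κ * (κ * ε + γ) ^ i)
      ≤ (j : ℝ) * κ ^ 2 * (κ * ε + γ) ^ (j - 1) * ε := by
    calc ∑ i ∈ Finset.range j, κ * γ ^ (j - 1 - i) * ε * (κ * (κ * ε + γ) ^ i)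
        ≤ ∑ i ∈ Finset.range j, κ ^ 2 * (κ * ε + γ) ^ (j - 1) * ε := by
          refine Finset.sum_le_sum fun i hi => ?_
          rw [Finset.mem_range] at hi
          have hpow : γ ^ (j - 1 - i) ≤ (κ * ε + γ) ^ (j - 1 - i) := by
            apply pow_le_pow_left₀ hγ.le; nlinarith
          have hsplit : (κ * ε + γ) ^ (j - 1 - i) * (κ * ε + γ) ^ i
              = (κ * ε + γ) ^ (j - 1) := by
            rw [← pow_add]; congr 1; omega
          have hgp : (0:ℝ) ≤ (κ * ε + γ) ^ i := by positivity
          have hmul : γ ^ (j - 1 - i) * (κ * ε + γ) ^ i ≤ (κ * ε + γ) ^ (j - 1) := by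
            rw [← hsplit]
            exact mul_le_mul_of_nonneg_right hpow hgp
          calc κ * γ ^ (j - 1 - i) * ε * (κ * (κ * ε + γ) ^ i)
              = (κ ^ 2 * ε) * (γ ^ (j - 1 - i) * (κ * ε + γ) ^ i) := by ring
            _ ≤ (κ ^ 2 * ε) * ((κ * ε + γ) ^ (j - 1)) := by
                apply mul_le_mul_of_nonneg_left hmul; positivity
            _ = κ ^ 2 * (κ * ε + γ) ^ (j - 1) * ε := by ring
      _ = (j : ℝ) * κ ^ 2 * (κ * ε + γ) ^ (j - 1) * ε := by
          rw [Finset.sum_const, Finset.card_range, nsmul_eq_mul]; ring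
  have hcast : ((k₂ : ℝ) - k₁) = (j : ℝ) := by
    rw [hj, Nat.cast_sub hk.le]
  rw [hcast]
  linarith
end

section
/- Let K ⊆ ℝ^d be a closed convex set, μ > 0, and let g_h, …, g_{T−1} : ℝ^d → ℝ be differentiable and μ-strongly convex. Let x* ∈ K, and let x_{t+1} = Π_K(x_t − η_t ∇f_t(x_t)) where Π_K is the Euclidean projection onto K, η_t = 2/(μ t) for t ≥ 1, and ∇f_t(x_t) = ∇g_t(x_t) + ε_t for error vectors ε_t. Suppose ‖x − x*‖ ≤ 2R for all x ∈ K. Then ∑_{t=h}^{T−1}(g_t(x_t) − g_t(x*)) ≤ −(μ/4)∑_{t=h}^{T−1}‖x_t − x*‖² + 2R²μh + ∑_{t=h}^{T−1}(η_t/2)‖∇f_t(x_t)‖² − ∑_{t=h}^{T−1}⟨ε_t, x_t − x*⟩. -/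
/-!
Strong convexity bounds each instantaneous regret `g_t(x_t) − g_t(x*)` by
`⟪∇g_t(x_t), x_t − x*⟫ − (μ/2)‖x_t − x*‖²`, and the variational inequality of the projection
(a nonexpansiveness statement) bounds `⟪∇f_t(x_t), x_t − x*⟫` by
`(‖x_t − x*‖² − ‖x_{t+1} − x*‖²)/(2η_t) + (η_t/2)‖∇f_t(x_t)‖²`. With `1/(2η_t) = μt/4`, summation
by parts turns the telescoping terms into at most `(μ/4)∑‖x_t − x*‖²` plus a boundary term
`(μ/4)(h − 1)‖x_h − x*‖² ≤ μ(h − 1)R²`; half of the strong-convexity gain absorbs the former.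
-/

open Finset
open scoped InnerProductSpace

section InnerProductSpace

variable {E : Type*} [NormedAddCommGroup E] [InnerProductSpace ℝ E]

theorem norm_sub_sq_le_of_inner_sub_nonpos {z p y : E} (hp : ⟪z - p, y - p⟫_ℝ ≤ 0) :
    ‖p - y‖ ^ 2 ≤ ‖z - y‖ ^ 2 := by
  have hsplit : z - y = (z - p) + (p - y) := by abel
  have hcross : ⟪z - p, p - y⟫_ℝ = -⟪z - p, y - p⟫_ℝ := by
    rw [← inner_neg_right, neg_sub]
  rw [hsplit, norm_add_sq_real, hcross]
  nlinarith [sq_nonneg ‖z - p‖]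

theorem inner_le_of_projected_gradient_step {x y p G : E} {η : ℝ} (hη : 0 < η)
    (hp : ⟪x - η • G - p, y - p⟫_ℝ ≤ 0) :
    ⟪G, x - y⟫_ℝ ≤ (‖x - y‖ ^ 2 - ‖p - y‖ ^ 2) / (2 * η) + η / 2 * ‖G‖ ^ 2 := by
  have hnonexp := norm_sub_sq_le_of_inner_sub_nonpos hp
  have hexpand :
      ‖x - η • G - y‖ ^ 2 = ‖x - y‖ ^ 2 - 2 * η * ⟪G, x - y⟫_ℝ + η ^ 2 * ‖G‖ ^ 2 := by
    rw [sub_right_comm, norm_sub_sq_real, real_inner_smul_right, real_inner_comm, norm_smul,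
      Real.norm_of_nonneg hη.le]
    ring
  rw [hexpand] at hnonexp
  rw [div_add' _ _ _ (by positivity), le_div_iff₀ (by positivity)]
  nlinarith

theorem regret_le_of_strongly_convex_projected_step {g : E → ℝ} {v ε x y p : E} {μ η : ℝ}
    (hη : 0 < η) (hsc : ⟪v, y - x⟫_ℝ + μ / 2 * ‖y - x‖ ^ 2 ≤ g y - g x)
    (hp : ⟪x - η • (v + ε) - p, y - p⟫_ℝ ≤ 0) :
    g x - g y ≤ (‖x - y‖ ^ 2 - ‖p - y‖ ^ 2) / (2 * η) - μ / 2 * ‖x - y‖ ^ 2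
      + η / 2 * ‖v + ε‖ ^ 2 - ⟪ε, x - y⟫_ℝ := by
  have hdescent := inner_le_of_projected_gradient_step hη hp
  rw [← neg_sub x y, inner_neg_right, norm_neg] at hsc
  rw [inner_add_left] at hdescent
  linarith

end InnerProductSpace

theorem Finset.sum_Ico_sub_succ_mul_natCast {R : Type*} [CommRing R] (a : ℕ → R) {h T : ℕ}
    (hhT : h ≤ T) :
    ∑ t ∈ Ico h T, (a t - a (t + 1)) * t
      = ∑ t ∈ Ico h T, a t + (h - 1) * a h - (T - 1) * a T := by
  induction T, hhT using Nat.le_induction with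
  | base => simp
  | succ T hhT ih =>
    rw [sum_Ico_succ_top hhT, sum_Ico_succ_top hhT, ih]
    push_cast
    ring

theorem Finset.sum_Ico_sub_succ_mul_natCast_le {a : ℕ → ℝ} (ha : ∀ t, 0 ≤ a t) {h T : ℕ}
    (hh : 1 ≤ h) :
    ∑ t ∈ Ico h T, (a t - a (t + 1)) * t ≤ ∑ t ∈ Ico h T, a t + (h - 1) * a h := by
  have hh' : (1 : ℝ) ≤ h := by exact_mod_cast hh
  rcases le_total h T with hhT | hTh
  · rw [sum_Ico_sub_succ_mul_natCast a hhT]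
    have hT : (1 : ℝ) ≤ T := by exact_mod_cast hh.trans hhT
    nlinarith [ha T]
  · rw [Ico_eq_empty_of_le hTh, sum_empty, sum_empty]
    nlinarith [ha h]

theorem ogd_strongly_convex_regret_general {d : ℕ} (K : Set (EuclideanSpace ℝ (Fin d)))
    (μ R : ℝ) (hμ : 0 < μ) (h T : ℕ) (hh : 1 ≤ h)
    (g : ℕ → EuclideanSpace ℝ (Fin d) → ℝ)
    (hgsc : ∀ t ∈ Finset.Ico h T, ∀ x y : EuclideanSpace ℝ (Fin d),
      (inner ℝ (gradient (g t) x) (y - x) : ℝ) + μ / 2 * ‖y - x‖ ^ 2 ≤ g t y - g t x)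
    (xstar : EuclideanSpace ℝ (Fin d)) (hxstar : xstar ∈ K)
    (x : ℕ → EuclideanSpace ℝ (Fin d)) (hxK : ∀ t, x t ∈ K)
    (ε : ℕ → EuclideanSpace ℝ (Fin d))
    (η : ℕ → ℝ) (hη : ∀ t : ℕ, 1 ≤ t → η t = 2 / (μ * t))
    (hproj : ∀ t : ℕ, ∀ y ∈ K,
      (inner ℝ (x t - η t • (gradient (g t) (x t) + ε t) - x (t + 1)) (y - x (t + 1)) : ℝ)
        ≤ 0)
    (hR : ∀ y ∈ K, ‖y - xstar‖ ≤ 2 * R) :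
    ∑ t ∈ Finset.Ico h T, (g t (x t) - g t xstar)
      ≤ -(μ / 4) * ∑ t ∈ Finset.Ico h T, ‖x t - xstar‖ ^ 2
        + 2 * R ^ 2 * μ * h
        + ∑ t ∈ Finset.Ico h T, (η t / 2) * ‖gradient (g t) (x t) + ε t‖ ^ 2
        - ∑ t ∈ Finset.Ico h T, (inner ℝ (ε t) (x t - xstar) : ℝ) := by
  set D : ℕ → ℝ := fun t ↦ ‖x t - xstar‖ ^ 2
  have hstep : ∀ t ∈ Ico h T, g t (x t) - g t xstar
      ≤ μ / 4 * ((D t - D (t + 1)) * t) - μ / 2 * D t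
        + η t / 2 * ‖gradient (g t) (x t) + ε t‖ ^ 2 - ⟪ε t, x t - xstar⟫_ℝ := by
    intro t ht
    have ht1 : (1 : ℝ) ≤ t := by exact_mod_cast hh.trans (mem_Ico.mp ht).1
    have hηt := hη t (by exact_mod_cast ht1)
    have hregret := regret_le_of_strongly_convex_projected_step (by rw [hηt]; positivity)
      (hgsc t ht (x t) xstar) (hproj t xstar hxstar)
    have hweight : 1 / (2 * η t) = μ / 4 * t := by
      rw [hηt]
      field_simp
      ring
    refine hregret.trans_eq ?_
    rw [div_eq_mul_one_div, hweight]
    ring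
  have hsum := sum_le_sum hstep
  simp only [sum_sub_distrib, sum_add_distrib, ← mul_sum] at hsum ⊢
  have htelescope := sum_Ico_sub_succ_mul_natCast_le (a := D) (fun _ ↦ sq_nonneg _) (T := T) hh
  have hDh : D h ≤ 4 * R ^ 2 := by
    have := hR (x h) (hxK h)
    nlinarith [norm_nonneg (x h - xstar)]
  have hboundary : μ / 4 * (((h : ℝ) - 1) * D h) ≤ 2 * R ^ 2 * μ * h := by
    calc μ / 4 * (((h : ℝ) - 1) * D h) ≤ μ / 4 * (h * (4 * R ^ 2)) := by
          gcongr
          linarith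
      _ ≤ 2 * R ^ 2 * μ * h := by
          nlinarith [mul_nonneg (mul_nonneg hμ.le (sq_nonneg R)) (Nat.cast_nonneg (α := ℝ) h)]
  linarith [mul_le_mul_of_nonneg_left htelescope (by positivity : (0 : ℝ) ≤ μ / 4)]

/-- Regret bound for projected online gradient descent with `μ`-strongly convex
functions: with `K` closed convex, `x_{t+1} = Π_K(x_t − η_t ∇f_t(x_t))` (encoded by the
variational characterization of the Euclidean projection), `η_t = 2/(μt)`,
`∇f_t(x_t) = ∇g_t(x_t) + ε_t`, and `‖y − x*‖ ≤ 2R` on `K`,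
`∑_{t=h}^{T−1}(g_t(x_t) − g_t(x*)) ≤ −(μ/4)∑‖x_t − x*‖² + 2R²μh + ∑(η_t/2)‖∇f_t(x_t)‖²
− ∑⟨ε_t, x_t − x*⟩`. -/
theorem ogd_strongly_convex_regret {d : ℕ} (K : Set (EuclideanSpace ℝ (Fin d)))
    (hKclosed : IsClosed K) (hKconv : Convex ℝ K)
    (μ R : ℝ) (hμ : 0 < μ) (h T : ℕ) (hh : 1 ≤ h)
    (g : ℕ → EuclideanSpace ℝ (Fin d) → ℝ)
    (hgdiff : ∀ t, Differentiable ℝ (g t))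
    (hgsc : ∀ t ∈ Finset.Ico h T, ∀ x y : EuclideanSpace ℝ (Fin d),
      (inner ℝ (gradient (g t) x) (y - x) : ℝ) + μ / 2 * ‖y - x‖ ^ 2 ≤ g t y - g t x)
    (xstar : EuclideanSpace ℝ (Fin d)) (hxstar : xstar ∈ K)
    (x : ℕ → EuclideanSpace ℝ (Fin d)) (hxK : ∀ t, x t ∈ K)
    (ε : ℕ → EuclideanSpace ℝ (Fin d))
    (η : ℕ → ℝ) (hη : ∀ t : ℕ, 1 ≤ t → η t = 2 / (μ * t))
    (hproj : ∀ t : ℕ, ∀ y ∈ K,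
      (inner ℝ (x t - η t • (gradient (g t) (x t) + ε t) - x (t + 1)) (y - x (t + 1)) : ℝ)
        ≤ 0)
    (hR : ∀ y ∈ K, ‖y - xstar‖ ≤ 2 * R) :
    ∑ t ∈ Finset.Ico h T, (g t (x t) - g t xstar)
      ≤ -(μ / 4) * ∑ t ∈ Finset.Ico h T, ‖x t - xstar‖ ^ 2
        + 2 * R ^ 2 * μ * h
        + ∑ t ∈ Finset.Ico h T, (η t / 2) * ‖gradient (g t) (x t) + ε t‖ ^ 2
        - ∑ t ∈ Finset.Ico h T, (inner ℝ (ε t) (x t - xstar) : ℝ) :=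
  ogd_strongly_convex_regret_general K μ R hμ h T hh g hgsc xstar hxstar x hxK ε η hη hproj hR
end
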